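/- arXiv:2510.08861 — 3 statements merged into one kernel-verified Lean document; each statement's English description precedes it below -/
import Mathlib

section
/- For every category B, the functor category B ⥤ Type is equivalent to the category whose objects are discrete opfibrations p : E ⥤ B and whose morphisms from (E, p) to (E', p') are functors f : E ⥤ E' with f ⋙ p' = p; the equivalence sends a functor H : B ⥤ Type to the projection functor from its category of elements to B. -/
/-
A discrete opfibration `p : E ⥤ B` is recovered from its fibre functor `b ↦ p⁻¹(b)`, on which a
morphism `f : b ⟶ c` acts by sending `e` to the codomain of the unique lift of `f` at `e`: the
functor `e ↦ (p e, e)` is an isomorphism over `B` from `E` onto the category of elements of the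
fibre functor, with inverse `(b, e) ↦ e`, morphisms being lifted uniquely. Full faithfulness of
`H ↦ ∫ H` rests on the projections being faithful, so that a functor over `B` between categories
of elements is determined by its action on objects, which is exactly a family of maps
`H b → H' b`; naturality comes from functoriality on morphisms.
-/

open CategoryTheory

universe u

/-- A functor `p : E ⥤ B` is a discrete opfibration if every morphism out of the image of an
object `e` has a unique lift with domain `e`. -/
def IsDiscreteOpfib {E : Type*} {B : Type*} [Category E] [Category B] (p : E ⥤ B) : Prop :=
  ∀ ⦃e : E⦄ ⦃b : B⦄ (f : p.obj e ⟶ b),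
    ∃! eg : Σ e' : E, e ⟶ e',
      ∃ h : p.obj eg.1 = b, p.map eg.2 ≫ eqToHom h = f

/-- A discrete opfibration over the category `B`. -/
structure DOpfOver (B : Type u) [Category.{u} B] where
  E : Cat.{u, u}
  p : E ⥤ B
  dopf : IsDiscreteOpfib p

/-- The category of discrete opfibrations over `B`, with morphisms functors strictly commuting
with the projections. -/
instance (B : Type u) [Category.{u} B] : Category (DOpfOver B) where
  Hom X Y := { f : X.E ⥤ Y.E // f ⋙ Y.p = X.p }
  id X := ⟨𝟭 X.E, rfl⟩
  comp {X Y Z} f g := ⟨f.1 ⋙ g.1, by rw [Functor.assoc, g.2, f.2]⟩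
  id_comp f := rfl
  comp_id f := rfl
  assoc f g h := rfl

namespace CategoryTheory.Functor

variable {E B : Type*} [Category E] [Category B]

theorem ext_of_comp_faithful_eq {E' : Type*} [Category E'] {F G : E ⥤ E'} (p : E' ⥤ B)
    [p.Faithful] (h_obj : ∀ e, F.obj e = G.obj e) (h_comp : F ⋙ p = G ⋙ p) : F = G := by
  refine Functor.ext h_obj fun e e' g => p.map_injective ?_
  simpa [eqToHom_map] using Functor.congr_hom h_comp g

end CategoryTheory.Functor

namespace IsDiscreteOpfib

variable {E B : Type*} [Category E] [Category B] {p : E ⥤ B} (hp : IsDiscreteOpfib p)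

noncomputable def lift {e : E} {b : B} (f : p.obj e ⟶ b) : Σ e' : E, e ⟶ e' :=
  (hp f).choose

theorem obj_lift {e : E} {b : B} (f : p.obj e ⟶ b) : p.obj (hp.lift f).1 = b :=
  (hp f).choose_spec.1.choose

theorem map_lift {e : E} {b : B} (f : p.obj e ⟶ b) :
    p.map (hp.lift f).2 ≫ eqToHom (hp.obj_lift f) = f :=
  (hp f).choose_spec.1.choose_spec

theorem lift_eq {e e' : E} {b : B} (f : p.obj e ⟶ b) (g : e ⟶ e') (h : p.obj e' = b)
    (hg : p.map g ≫ eqToHom h = f) : hp.lift f = ⟨e', g⟩ :=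
  ((hp f).choose_spec.2 ⟨e', g⟩ ⟨h, hg⟩).symm

theorem lift_map {e e' : E} (g : e ⟶ e') : hp.lift (p.map g) = ⟨e', g⟩ :=
  hp.lift_eq _ g rfl (Category.comp_id _)

theorem lift_comp_eqToHom_fst {e : E} {b c : B} (f : p.obj e ⟶ b) (h : b = c) :
    (hp.lift (f ≫ eqToHom h)).1 = (hp.lift f).1 := by
  subst h
  rw [eqToHom_refl, Category.comp_id]

theorem faithful (hp : IsDiscreteOpfib p) : p.Faithful where
  map_injective {e e'} g g' h := by
    have hg := hp.lift_map g
    rw [h, hp.lift_map g'] at hg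
    exact (eq_of_heq (Sigma.mk.inj_iff.mp hg).2).symm

noncomputable def homOfLift {e e' : E} (f : p.obj e ⟶ p.obj e') (h : (hp.lift f).1 = e') :
    e ⟶ e' :=
  (hp.lift f).2 ≫ eqToHom h

@[simp]
theorem map_homOfLift {e e' : E} (f : p.obj e ⟶ p.obj e') (h : (hp.lift f).1 = e') :
    p.map (hp.homOfLift f h) = f := by
  rw [homOfLift, Functor.map_comp, eqToHom_map]
  exact hp.map_lift f

noncomputable def fiber : B ⥤ Type _ where
  obj b := {e : E // p.obj e = b}
  map f := TypeCat.ofHom fun s => ⟨(hp.lift (eqToHom s.2 ≫ f)).1, hp.obj_lift _⟩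
  map_id b := by
    ext s : 3
    have h := hp.lift_eq (eqToHom s.2 ≫ 𝟙 b) (𝟙 s.1) s.2 (by simp)
    exact Subtype.ext (congrArg Sigma.fst h)
  map_comp f g := by
    ext s : 3
    apply Subtype.ext
    let l := hp.lift (eqToHom s.2 ≫ f)
    let l' := hp.lift (eqToHom (hp.obj_lift (eqToHom s.2 ≫ f)) ≫ g)
    refine congrArg Sigma.fst (hp.lift_eq _ (l.2 ≫ l'.2) (hp.obj_lift _) ?_)
    rw [Functor.map_comp, Category.assoc, hp.map_lift, ← Category.assoc, hp.map_lift,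
      Category.assoc]

noncomputable def toFiberElements : E ⥤ hp.fiber.Elements where
  obj e := ⟨p.obj e, e, rfl⟩
  map {e e'} g := ⟨p.map g, Subtype.ext <| by
    change (hp.lift (eqToHom rfl ≫ p.map g)).1 = e'
    rw [eqToHom_refl, Category.id_comp, hp.lift_map]⟩
  map_id e := CategoryOfElements.ext _ _ _ (p.map_id e)
  map_comp f g := CategoryOfElements.ext _ _ _ (p.map_comp f g)

theorem toFiberElements_comp_π : hp.toFiberElements ⋙ CategoryOfElements.π hp.fiber = p :=
  rfl

noncomputable def ofFiberElements : hp.fiber.Elements ⥤ E where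
  obj s := s.2.1
  map {s t} φ := hp.homOfLift (eqToHom s.2.2 ≫ φ.1 ≫ eqToHom t.2.2.symm) <| by
    rw [← Category.assoc, hp.lift_comp_eqToHom_fst]
    exact congrArg Subtype.val φ.2
  map_id s := by
    have := hp.faithful
    exact p.map_injective (by simp)
  map_comp φ ψ := by
    have := hp.faithful
    exact p.map_injective (by simp)

theorem ofFiberElements_comp : hp.ofFiberElements ⋙ p = CategoryOfElements.π hp.fiber :=
  CategoryTheory.Functor.ext (fun s => s.2.2) fun _ _ _ => hp.map_homOfLift _ _

theorem toFiberElements_comp_ofFiberElements :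
    hp.toFiberElements ⋙ hp.ofFiberElements = 𝟭 E := by
  have := hp.faithful
  refine Functor.ext_of_comp_faithful_eq p (fun _ => rfl) ?_
  rw [Functor.assoc, ofFiberElements_comp, toFiberElements_comp_π, Functor.id_comp]

theorem ofFiberElements_comp_toFiberElements :
    hp.ofFiberElements ⋙ hp.toFiberElements = 𝟭 hp.fiber.Elements := by
  refine Functor.ext_of_comp_faithful_eq (CategoryOfElements.π hp.fiber) ?_ ?_
  · rintro ⟨b, e, rfl⟩
    rfl
  · rw [Functor.assoc, toFiberElements_comp_π, ofFiberElements_comp, Functor.id_comp]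

end IsDiscreteOpfib

namespace CategoryTheory.CategoryOfElements

variable {B : Type*} [Category B]

theorem isDiscreteOpfib_π (H : B ⥤ Type*) : IsDiscreteOpfib (π H) := by
  rintro ⟨c, x⟩ b f
  refine ⟨⟨⟨b, H.map f x⟩, ⟨f, rfl⟩⟩, ⟨rfl, Category.comp_id f⟩, ?_⟩
  rintro ⟨⟨c', x'⟩, g⟩ ⟨h, hg⟩
  obtain rfl : c' = b := h
  replace hg : g.1 = f := (Category.comp_id _).symm.trans hg
  obtain rfl : H.map f x = x' := hg ▸ g.2
  exact congrArg (Sigma.mk _) (Subtype.ext hg)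

theorem map_snd_of_val_eq {H : B ⥤ Type*} {s t : H.Elements} (φ : s ⟶ t) {b c : B}
    (hs : s.1 = b) (ht : t.1 = c) (g : b ⟶ c) (hφ : φ.1 = eqToHom hs ≫ g ≫ eqToHom ht.symm) :
    H.map g (H.map (eqToHom hs) s.2) = H.map (eqToHom ht) t.2 := by
  obtain ⟨b, x⟩ := s
  obtain ⟨c, y⟩ := t
  subst hs ht
  simp only [eqToHom_refl, Category.id_comp, Category.comp_id] at hφ
  simpa [← hφ] using φ.2

end CategoryTheory.CategoryOfElements

namespace DOpfOver

variable {B : Type u} [Category.{u} B]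

def elementsFunctor : (B ⥤ Type u) ⥤ DOpfOver B where
  obj H := ⟨Cat.of H.Elements, CategoryOfElements.π H, CategoryOfElements.isDiscreteOpfib_π H⟩
  map α := ⟨CategoryOfElements.map α, CategoryOfElements.map_π α⟩

noncomputable def isoElementsFunctorObjFiber (X : DOpfOver B) :
    X ≅ elementsFunctor.obj X.dopf.fiber where
  hom := ⟨X.dopf.toFiberElements, X.dopf.toFiberElements_comp_π⟩
  inv := ⟨X.dopf.ofFiberElements, X.dopf.ofFiberElements_comp⟩
  hom_inv_id := Subtype.ext X.dopf.toFiberElements_comp_ofFiberElements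
  inv_hom_id := Subtype.ext X.dopf.ofFiberElements_comp_toFiberElements

instance : (elementsFunctor (B := B)).EssSurj :=
  ⟨fun X => ⟨_, ⟨(isoElementsFunctorObjFiber X).symm⟩⟩⟩

instance : (elementsFunctor (B := B)).Faithful where
  map_injective {H H'} α β h := by
    ext b x
    have hx := Functor.congr_obj (congrArg Subtype.val h) ⟨b, x⟩
    exact eq_of_heq (Sigma.mk.inj_iff.mp hx).2

def natTransOfHom {H H' : B ⥤ Type u} (q : elementsFunctor.obj H ⟶ elementsFunctor.obj H') :
    H ⟶ H' where
  app b := TypeCat.ofHom fun x =>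
    H'.map (eqToHom (Functor.congr_obj q.2 ⟨b, x⟩)) (q.1.obj ⟨b, x⟩).2
  naturality b c g := by
    ext x
    let φ : H.elementsMk b x ⟶ H.elementsMk c (H.map g x) := CategoryOfElements.homMk _ _ g rfl
    exact (CategoryOfElements.map_snd_of_val_eq (q.1.map φ) _ _ g (Functor.congr_hom q.2 φ)).symm

theorem elementsFunctor_map_natTransOfHom {H H' : B ⥤ Type u}
    (q : elementsFunctor.obj H ⟶ elementsFunctor.obj H') :
    elementsFunctor.map (natTransOfHom q) = q := by
  apply Subtype.ext
  change CategoryOfElements.map (natTransOfHom q) = q.1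
  refine Functor.ext_of_comp_faithful_eq (CategoryOfElements.π H') ?_ ?_
  · intro s
    exact (Functor.Elements.ext _ _ (Functor.congr_obj q.2 s) rfl).symm
  · exact (CategoryOfElements.map_π _).trans q.2.symm

instance : (elementsFunctor (B := B)).Full :=
  ⟨fun q => ⟨natTransOfHom q, elementsFunctor_map_natTransOfHom q⟩⟩

end DOpfOver

/-- The functor category `B ⥤ Type` is equivalent to the category of discrete opfibrations
over `B`, via the category-of-elements projection. -/
theorem functorCategory_equiv_discreteOpfibrations (B : Type u) [Category.{u} B] :
    ∃ e : (B ⥤ Type u) ≌ DOpfOver B,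
      ∀ H : B ⥤ Type u,
        (e.functor.obj H).E = Cat.of H.Elements ∧
          HEq (e.functor.obj H).p (CategoryOfElements.π H) := by
  have : (DOpfOver.elementsFunctor (B := B)).IsEquivalence := { }
  exact ⟨DOpfOver.elementsFunctor.asEquivalence, fun H => ⟨rfl, HEq.rfl⟩⟩
end

section
/- For every category B, the full subcategory of the slice category of Cat over B spanned by the discrete opfibrations into B is reflective: its inclusion functor admits a left adjoint. Here the slice category has as objects functors a : A ⥤ B and as morphisms (A,a) → (A',a') the functors F : A ⥤ A' with F ⋙ a' = a. -/
/-!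
The reflection of `a : A ⥤ B` is the category of elements of `b ↦ π₀(a ↓ b)`, with unit
`a₀ ↦ (a a₀, [𝟙])`. A discrete opfibration `p : E ⥤ B` maps back from the category of elements of its
fibre functor `b ↦ p⁻¹(b)`, which acts by unique lifting. So a functor `G : A ⥤ E` over `B` factors
through the unit via the natural transformation `π₀(a ↓ -) ⟶ p⁻¹(-)` sending the component of
`f : a a₀ ⟶ b` to the transport of `G a₀` along `f`. The factorization is unique: functors into `E`
with the same composite with `p` are equal once they agree on objects, agreement on objects
propagates along morphisms, and every element `(b, [f])` receives the morphism `f` from the unit.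
-/

open CategoryTheory

universe u

universe v w u₁ v₁ u₂ v₂

namespace IsDiscreteOpfib

variable {E : Type u₁} [Category.{v₁} E] {B : Type u₂} [Category.{v₂} B] {p : E ⥤ B}
  (hp : IsDiscreteOpfib p)

include hp in
theorem faithful_s9 : p.Faithful where
  map_injective {e e'} g₁ g₂ h := by
    have := (hp (p.map g₂)).unique (y₁ := ⟨e', g₁⟩) (y₂ := ⟨e', g₂⟩) ⟨rfl, by simpa using h⟩
      ⟨rfl, by simp⟩
    exact eq_of_heq (Sigma.mk.inj_iff.mp this).2

section Lift

variable {e : E} {b : B} (f : p.obj e ⟶ b)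

noncomputable def liftObj : E := (hp f).exists.choose.1

noncomputable def liftMap : e ⟶ hp.liftObj f := (hp f).exists.choose.2

theorem obj_liftObj : p.obj (hp.liftObj f) = b := (hp f).exists.choose_spec.choose

@[simp]
theorem map_liftMap : p.map (hp.liftMap f) = f ≫ eqToHom (hp.obj_liftObj f).symm :=
  (comp_eqToHom_iff _ _ _).mp (hp f).exists.choose_spec.choose_spec

theorem liftObj_eq {e' : E} (g : e ⟶ e') (h : p.obj e' = b)
    (hg : p.map g = f ≫ eqToHom h.symm) : hp.liftObj f = e' :=
  congrArg Sigma.fst <| (hp f).unique (y₁ := ⟨_, hp.liftMap f⟩) (y₂ := ⟨e', g⟩)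
    ⟨hp.obj_liftObj f, by simp⟩ ⟨h, by simp [hg]⟩

end Lift

-- Reducible, so that `rw` and `simp` see the fibres `{e // p.obj e = b}` through `fiberFunctor.obj`.
noncomputable abbrev fiberFunctor : B ⥤ Type u₁ where
  obj b := {e : E // p.obj e = b}
  map f := TypeCat.ofHom fun e => ⟨hp.liftObj (eqToHom e.2 ≫ f), hp.obj_liftObj _⟩
  map_id b := by
    ext ⟨e, rfl⟩
    exact hp.liftObj_eq _ (𝟙 e) rfl (by simp)
  map_comp f g := by
    ext ⟨e, h⟩
    exact hp.liftObj_eq _ (hp.liftMap (eqToHom h ≫ f) ≫ hp.liftMap (eqToHom (hp.obj_liftObj _) ≫ g))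
      (hp.obj_liftObj _) (by simp)

theorem fiberFunctor_map_eq {b b' : B} (f : b ⟶ b') {e e' : E} (h : p.obj e = b)
    (h' : p.obj e' = b') (g : e ⟶ e') (hg : p.map g = eqToHom h ≫ f ≫ eqToHom h'.symm) :
    hp.fiberFunctor.map f ⟨e, h⟩ = ⟨e', h'⟩ :=
  Subtype.ext (hp.liftObj_eq _ g h' (by simp [hg]))

noncomputable def liftHom {e e' : E} {b b' : B} (h : p.obj e = b) (f : b ⟶ b')
    (h' : hp.liftObj (eqToHom h ≫ f) = e') : e ⟶ e' :=
  hp.liftMap _ ≫ eqToHom h'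

@[simp]
theorem map_liftHom {e e' : E} {b b' : B} (h : p.obj e = b) (f : b ⟶ b')
    (h' : hp.liftObj (eqToHom h ≫ f) = e') :
    p.map (hp.liftHom h f h') = eqToHom h ≫ f ≫ eqToHom (h' ▸ hp.obj_liftObj _).symm := by
  simp [liftHom, eqToHom_map]

theorem liftHom_id {e : E} {b : B} (h : p.obj e = b) (h' : hp.liftObj (eqToHom h ≫ 𝟙 b) = e) :
    hp.liftHom h (𝟙 b) h' = 𝟙 e :=
  hp.faithful_s9.map_injective (by simp)

theorem liftHom_comp {e₁ e₂ e₃ : E} {b₁ b₂ b₃ : B} (h₁ : p.obj e₁ = b₁) (h₂ : p.obj e₂ = b₂)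
    (f : b₁ ⟶ b₂) (g : b₂ ⟶ b₃) (hf : hp.liftObj (eqToHom h₁ ≫ f) = e₂)
    (hg : hp.liftObj (eqToHom h₂ ≫ g) = e₃) (hfg : hp.liftObj (eqToHom h₁ ≫ f ≫ g) = e₃) :
    hp.liftHom h₁ (f ≫ g) hfg = hp.liftHom h₁ f hf ≫ hp.liftHom h₂ g hg :=
  hp.faithful_s9.map_injective (by simp)

noncomputable def fromElements : hp.fiberFunctor.Elements ⥤ E where
  obj x := x.2.1
  map {x _} m := hp.liftHom x.2.2 m.1 (congrArg Subtype.val m.2)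
  map_id _ := hp.liftHom_id _ _
  map_comp _ _ := hp.liftHom_comp _ _ _ _ _ _ _

theorem fromElements_comp : hp.fromElements ⋙ p = CategoryOfElements.π hp.fiberFunctor :=
  CategoryTheory.Functor.ext (fun x => x.2.2) fun _ _ m => hp.map_liftHom _ m.1 _

section Uniqueness

variable {C : Type*} [Category C] {K₁ K₂ : C ⥤ E} (hK : K₁ ⋙ p = K₂ ⋙ p)
include hp hK

theorem obj_eq_of_hom {c c' : C} (m : c ⟶ c') (h : K₁.obj c = K₂.obj c) :
    K₁.obj c' = K₂.obj c' := by
  have hc' : p.obj (K₂.obj c') = p.obj (K₁.obj c') := (Functor.congr_obj hK c').symm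
  have hm : p.map (K₁.map m) = eqToHom _ ≫ p.map (K₂.map m) ≫ eqToHom _ := Functor.congr_hom hK m
  rw [← hp.liftObj_eq (p.map (K₁.map m)) (K₁.map m) rfl (by simp),
    hp.liftObj_eq _ (eqToHom h ≫ K₂.map m) hc' (by simp [hm, eqToHom_map])]

theorem functor_ext (h : ∀ c, K₁.obj c = K₂.obj c) : K₁ = K₂ :=
  CategoryTheory.Functor.ext h fun _ _ m =>
    hp.faithful_s9.map_injective (by simpa [eqToHom_map] using Functor.congr_hom hK m)

end Uniqueness

end IsDiscreteOpfib

theorem CategoryTheory.CategoryOfElements.isDiscreteOpfib_π_s9 {C : Type*} [Category C]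
    (F : C ⥤ Type*) : IsDiscreteOpfib (CategoryOfElements.π F) := by
  rintro ⟨c, x⟩ b f
  refine ⟨⟨⟨b, F.map f x⟩, ⟨f, rfl⟩⟩, ⟨rfl, Category.comp_id f⟩, ?_⟩
  rintro ⟨⟨b', x'⟩, m⟩ ⟨hb, hm⟩
  change b' = b at hb
  subst hb
  have hmf : m.val = f := (Category.comp_id _).symm.trans hm
  obtain rfl : x' = F.map f x := hmf ▸ m.prop.symm
  obtain rfl : m = ⟨f, rfl⟩ := Subtype.ext hmf
  rfl

theorem CategoryTheory.eq_of_zigzag_of_hom {J : Type*} [Category J] {X : Sort*} (f : J → X)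
    (hf : ∀ ⦃j j' : J⦄, (j ⟶ j') → f j = f j') {j j' : J} (h : Zigzag j j') : f j = f j' := by
  induction h with
  | refl => rfl
  | tail _ hz ih => exact ih.trans (hz.elim (fun ⟨k⟩ => hf k) fun ⟨k⟩ => (hf k).symm)

section Components

variable {A : Type u} [Category.{v} A] {B : Type u₂} [Category.{u} B] (a : A ⥤ B)

def componentsFunctor : B ⥤ Type u := CostructuredArrow.functor a ⋙ Cat.connectedComponents

def toComponentsElements : A ⥤ (componentsFunctor a).Elements where
  obj a₀ := ⟨a.obj a₀, Quotient.mk _ (CostructuredArrow.mk (𝟙 (a.obj a₀)))⟩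
  map h := ⟨a.map h, Quotient.sound (Zigzag.of_hom (CostructuredArrow.homMk h
    ((Category.comp_id _).trans (Category.id_comp _).symm)))⟩

theorem toComponentsElements_comp_π : toComponentsElements a ⋙ CategoryOfElements.π _ = a := rfl

def homToComponentsElements {b : B} (y : CostructuredArrow a b) :
    (toComponentsElements a).obj y.left ⟶ ⟨b, Quotient.mk _ y⟩ :=
  ⟨y.hom, congrArg (Quotient.mk _) (by
    change (CostructuredArrow.map y.hom).obj _ = y
    rw [CostructuredArrow.map_mk, Category.id_comp]
    exact (CostructuredArrow.eq_mk y).symm)⟩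

variable {E : Type u} [Category.{w} E] {p : E ⥤ B} (hp : IsDiscreteOpfib p)
  {G : A ⥤ E} (hG : G ⋙ p = a)

noncomputable def fiberTransport {b : B} (y : CostructuredArrow a b) : hp.fiberFunctor.obj b :=
  hp.fiberFunctor.map y.hom ⟨G.obj y.left, Functor.congr_obj hG y.left⟩

theorem fiberTransport_eq_of_hom {b : B} {y y' : CostructuredArrow a b} (k : y ⟶ y') :
    fiberTransport a hp hG y = fiberTransport a hp hG y' := by
  rw [fiberTransport, ← CostructuredArrow.w k, Functor.map_comp_apply,
    hp.fiberFunctor_map_eq _ _ _ (G.map k.left) (Functor.congr_hom hG k.left)]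
  rfl

noncomputable def componentsDesc : componentsFunctor a ⟶ hp.fiberFunctor where
  app b := TypeCat.ofHom <| Quotient.lift (fiberTransport a hp hG)
    fun _ _ => eq_of_zigzag_of_hom _ fun _ _ => fiberTransport_eq_of_hom a hp hG
  naturality b b' g := by
    ext ⟨y⟩ : 3
    exact hp.fiberFunctor.map_comp_apply y.hom g _

noncomputable def componentsLift : (componentsFunctor a).Elements ⥤ E :=
  CategoryOfElements.map (componentsDesc a hp hG) ⋙ hp.fromElements

theorem componentsLift_comp : componentsLift a hp hG ⋙ p = CategoryOfElements.π _ := by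
  rw [componentsLift, Functor.assoc, hp.fromElements_comp, CategoryOfElements.map_π]

theorem toComponentsElements_comp_componentsLift :
    toComponentsElements a ⋙ componentsLift a hp hG = G :=
  hp.functor_ext (by rw [Functor.assoc, componentsLift_comp, toComponentsElements_comp_π, hG])
    fun a₀ => congrArg Subtype.val (hp.fiberFunctor.map_id_apply (a.obj a₀) _)

theorem eq_componentsLift {K : (componentsFunctor a).Elements ⥤ E}
    (hK : K ⋙ p = CategoryOfElements.π _) (hKG : toComponentsElements a ⋙ K = G) :
    K = componentsLift a hp hG :=
  hp.functor_ext (hK.trans (componentsLift_comp a hp hG).symm) fun ⟨_, x⟩ =>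
    Quotient.inductionOn x fun y => hp.obj_eq_of_hom (hK.trans (componentsLift_comp a hp hG).symm)
      (homToComponentsElements a y)
      (Functor.congr_obj (hKG.trans (toComponentsElements_comp_componentsLift a hp hG).symm) y.left)

end Components

section Reflection

open Limits

def discreteOpfibrations (B : Type u) [Category.{u} B] : ObjectProperty (Over (Cat.of B)) :=
  fun f => IsDiscreteOpfib f.hom.toFunctor

variable {B : Type u} [Category.{u} B]

def reflection (X : Over (Cat.of B)) : (discreteOpfibrations B).FullSubcategory :=
  ⟨Over.mk (CategoryOfElements.π (componentsFunctor X.hom.toFunctor)).toCatHom,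
    CategoryOfElements.isDiscreteOpfib_π_s9 _⟩

def reflectionArrow (X : Over (Cat.of B)) : StructuredArrow X (discreteOpfibrations B).ι :=
  StructuredArrow.mk (Y := reflection X)
    (Over.homMk (show X.left ⟶ Cat.of _ from (toComponentsElements X.hom.toFunctor).toCatHom)
      (Cat.Hom.ext (toComponentsElements_comp_π _)))

noncomputable def isInitialReflectionArrow (X : Over (Cat.of B)) : IsInitial (reflectionArrow X) :=
  IsInitial.ofUniqueHom
    (fun T => StructuredArrow.homMk (ObjectProperty.homMk (Over.homMk
      (componentsLift _ T.right.property (congrArg Cat.Hom.toFunctor (Over.w T.hom))).toCatHom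
      (Cat.Hom.ext (componentsLift_comp _ _ _))))
      (Over.OverMorphism.ext (Cat.Hom.ext (by
        exact toComponentsElements_comp_componentsLift _ _ _))))
    fun T m => StructuredArrow.hom_ext _ _ (ObjectProperty.hom_ext _ (Over.OverMorphism.ext
      (Cat.Hom.ext (eq_componentsLift _ _ _ (congrArg Cat.Hom.toFunctor (Over.w m.right.hom))
        (by exact congrArg (fun k => k.left.toFunctor) (StructuredArrow.w m))))))

end Reflection

/-- The full subcategory of the slice of `Cat` over `B` spanned by the discrete opfibrations
is reflective: the inclusion admits a left adjoint. -/
theorem discreteOpfibrations_reflective (B : Type u) [Category.{u} B] :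
    (ObjectProperty.ι
      (fun f : Over (Cat.of B) => IsDiscreteOpfib f.hom.toFunctor)).IsRightAdjoint :=
  isRightAdjoint_iff_hasInitial_structuredArrow.mpr fun X => (isInitialReflectionArrow X).hasInitial
end

section
/- Let C be a category. In the slice category of Cat over C (objects: functors a : A ⥤ C; morphisms (A,a) → (B,b): functors F : A ⥤ B with F ⋙ b = a), the class of morphisms whose underlying functor is initial and the class of morphisms whose underlying functor is a discrete opfibration form an orthogonal factorization system: every morphism of the slice factors as a morphism of the first class followed by one of the second, and for every morphism u of the first class and p of the second, every strictly commuting square from u to p in the slice admits a unique diagonal filler (a functor over C making both triangles commute strictly). -/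
open CategoryTheory

universe u

/-!
The factorization of `F : A ⥤ B` goes through the category of elements of `b ↦ π₀ (F ↓ b)`.
Its projection to `B` is a discrete opfibration, and `a ↦ (F a, [𝟙])` is initial because the
comma category over an element `(b, c)` is hit, surjectively on objects, by the connected
component `c` of `F ↓ b`.

For a square `U ⋙ S = T ⋙ P` with `U` initial and `P` a discrete opfibration, lifting
`S (U a ⟶ b)` from `T a` gives a codomain that does not depend on `(a, U a ⟶ b)`, because
`U ↓ b` is connected; this is the diagonal on objects. A discrete opfibration is faithful,
so a functor over `S` is determined by its objects, which gives both the diagonal on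
morphisms and its uniqueness.
-/

namespace CategoryTheory

theorem isConnected_of_surjective_obj {J : Type*} [Category J] {K : Type*} [Category K]
    [IsConnected J] (G : J ⥤ K) (hG : Function.Surjective G.obj) : IsConnected K := by
  have : Nonempty K := ⟨G.obj (Classical.arbitrary J)⟩
  refine zigzag_isConnected fun k k' ↦ ?_
  obtain ⟨j, rfl⟩ := hG k
  obtain ⟨j', rfl⟩ := hG k'
  exact zigzag_obj_of_zigzag G (isPreconnected_zigzag j j')

theorem CategoryOfElements.isDiscreteOpfib_π_s10 {C : Type*} [Category C] (G : C ⥤ Type*) :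
    IsDiscreteOpfib (CategoryOfElements.π G) := by
  rintro ⟨c, x⟩ c' f
  refine ⟨⟨⟨c', G.map f x⟩, ⟨f, rfl⟩⟩, ⟨rfl, Category.comp_id f⟩, ?_⟩
  rintro ⟨⟨c'', y⟩, g, hg⟩ ⟨rfl, hgf⟩
  change g ≫ 𝟙 _ = f at hgf
  rw [Category.comp_id] at hgf
  change c ⟶ c'' at g
  change G.map g x = y at hg
  subst hgf hg
  rfl

lemma Over.cat_hom_ext_iff {C : Cat} {X Y : Over C} (f g : X ⟶ Y) :
    f = g ↔ f.left.toFunctor = g.left.toFunctor := by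
  rw [Over.OverMorphism.ext_iff, Cat.Hom.ext_iff]

namespace Functor

variable {B : Type*} [Category B] {E : Type*} [Category E] {F : Type*} [Category F]
  {P : E ⥤ F}

lemma isHomLift_iff_map_comp_eqToHom {e e' : E} (φ : e ⟶ e') {b : F} (f : P.obj e ⟶ b) :
    P.IsHomLift f φ ↔ ∃ h : P.obj e' = b, P.map φ ≫ eqToHom h = f :=
  ⟨fun _ ↦ ⟨IsHomLift.codomain_eq P f φ, by simp [IsHomLift.fac' P f φ]⟩,
    fun ⟨h, w⟩ ↦ IsHomLift.of_fac P f φ rfl h (by simp [← w])⟩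

lemma IsHomLift.map_heq {R S : F} {a b : E} (f : R ⟶ S) (φ : a ⟶ b) [P.IsHomLift f φ] :
    P.map φ ≍ f := by
  subst_hom_lift P f φ; rfl

lemma isHomLift_map_of_comp_eq {D : B ⥤ E} {S : B ⥤ F} (h : D ⋙ P = S) {b b' : B}
    (g : b ⟶ b') : P.IsHomLift (S.map g) (D.map g) := by
  subst h; exact IsHomLift.map (D.map g)

lemma ext_of_comp_eq_of_faithful [P.Faithful] {D D' : B ⥤ E} (h : D ⋙ P = D' ⋙ P)
    (hobj : ∀ b, D.obj b = D'.obj b) : D = D' :=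
  Functor.ext hobj fun b b' g ↦ P.map_injective <| by
    simpa [eqToHom_map] using Functor.congr_hom h g

lemma exists_comp_eq_of_isHomLift [P.Faithful] (S : B ⥤ F) (d : B → E)
    (h : ∀ ⦃b b' : B⦄ (g : b ⟶ b'), ∃ m : d b ⟶ d b', P.IsHomLift (S.map g) m) :
    ∃ D : B ⥤ E, (∀ b, D.obj b = d b) ∧ D ⋙ P = S := by
  choose m hm using h
  have h_obj (b : B) : P.obj (d b) = S.obj b :=
    IsHomLift.domain_eq P (S.map (𝟙 b)) (m (𝟙 b))
  refine ⟨Faithful.div S P d h_obj (fun g ↦ m g) fun {_ _ g} ↦ IsHomLift.map_heq _ (m g),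
    fun _ ↦ rfl, Functor.hext h_obj fun _ _ g ↦ IsHomLift.map_heq _ (m g)⟩

variable {A : Type*} [Category A] (F : A ⥤ B)

abbrev costructuredArrowComponents : B ⥤ Type _ :=
  CostructuredArrow.functor F ⋙ Cat.connectedComponents

lemma costructuredArrowComponents_map_mk_id {a : A} {b : B} (f : F.obj a ⟶ b) :
    F.costructuredArrowComponents.map f (ConnectedComponents.mk (CostructuredArrow.mk (𝟙 _))) =
      ConnectedComponents.mk (CostructuredArrow.mk f) :=
  congrArg (fun g ↦ ConnectedComponents.mk (CostructuredArrow.mk g)) (Category.id_comp f)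

def toComponentElements : A ⥤ F.costructuredArrowComponents.Elements where
  obj a := ⟨F.obj a, ConnectedComponents.mk (CostructuredArrow.mk (𝟙 (F.obj a)))⟩
  map g := ⟨F.map g, (costructuredArrowComponents_map_mk_id F _).trans <|
    _root_.Quotient.sound (Zigzag.of_hom (CostructuredArrow.homMk g (by simp)))⟩

instance initial_toComponentElements : F.toComponentElements.Initial where
  out z := by
    let c : ConnectedComponents (CostructuredArrow F z.1) := z.2
    let G : c.Component ⥤ CostructuredArrow F.toComponentElements z :=
      { obj j := CostructuredArrow.mk (Y := j.obj.left)
          ⟨j.obj.hom, (costructuredArrowComponents_map_mk_id F _).trans j.property⟩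
        map m := CostructuredArrow.homMk m.hom.left
          (CategoryOfElements.ext _ _ _ (CostructuredArrow.w m.hom)) }
    exact isConnected_of_surjective_obj G fun O ↦
      ⟨⟨CostructuredArrow.mk O.hom.1,
        (costructuredArrowComponents_map_mk_id F _).symm.trans O.hom.2⟩, rfl⟩

end Functor

end CategoryTheory

namespace IsDiscreteOpfib

open Functor

variable {A : Type*} [Category A] {B : Type*} [Category B] {E : Type*} [Category E]
  {F : Type*} [Category F] {P : E ⥤ F}

lemma iff_existsUnique_isHomLift : IsDiscreteOpfib P ↔
    ∀ ⦃e : E⦄ ⦃b : F⦄ (f : P.obj e ⟶ b), ∃! eg : Σ e' : E, e ⟶ e', P.IsHomLift f eg.2 := by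
  simp only [isHomLift_iff_map_comp_eqToHom]; rfl

variable (hP : IsDiscreteOpfib P)
include hP

lemma exists_isHomLift {R S : F} (f : R ⟶ S) {e : E} (he : P.obj e = R) :
    ∃ (e' : E) (φ : e ⟶ e'), P.IsHomLift f φ := by
  subst he
  obtain ⟨⟨e', φ⟩, hφ, -⟩ := iff_existsUnique_isHomLift.1 hP f
  exact ⟨e', φ, hφ⟩

lemma sigma_eq_of_isHomLift {R S : F} (f : R ⟶ S) {e e₁ e₂ : E} (φ₁ : e ⟶ e₁) (φ₂ : e ⟶ e₂)
    [P.IsHomLift f φ₁] [P.IsHomLift f φ₂] : (⟨e₁, φ₁⟩ : Σ e' : E, e ⟶ e') = ⟨e₂, φ₂⟩ := by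
  obtain rfl := IsHomLift.domain_eq P f φ₁
  exact (iff_existsUnique_isHomLift.1 hP f).unique ‹_› ‹_›

lemma codomain_eq_of_isHomLift {R S : F} (f : R ⟶ S) {e e₁ e₂ : E} (φ₁ : e ⟶ e₁)
    (φ₂ : e ⟶ e₂) [P.IsHomLift f φ₁] [P.IsHomLift f φ₂] : e₁ = e₂ :=
  congrArg Sigma.fst (hP.sigma_eq_of_isHomLift f φ₁ φ₂)

lemma faithful_s10 : P.Faithful where
  map_injective {_ _} φ₁ φ₂ h := by
    have : P.IsHomLift (P.map φ₁) φ₂ := h ▸ IsHomLift.map φ₂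
    exact eq_of_heq (Sigma.mk.inj_iff.1 (hP.sigma_eq_of_isHomLift (P.map φ₁) φ₁ φ₂)).2

variable {U : A ⥤ B} {T : A ⥤ E} {S : B ⥤ F}

lemma exists_forall_codomain_eq_of_isHomLift (hsq : U ⋙ S = T ⋙ P) (b : B)
    [IsConnected (CostructuredArrow U b)] :
    ∃ e : E, ∀ (j : CostructuredArrow U b) {e' : E} (φ : T.obj j.left ⟶ e'),
      P.IsHomLift (S.map j.hom) φ → e' = e := by
  choose L φ hφ using fun j : CostructuredArrow U b ↦
    hP.exists_isHomLift (S.map j.hom) (Functor.congr_obj hsq j.left).symm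
  have hL ⦃j j' : CostructuredArrow U b⦄ (m : j ⟶ j') : L j = L j' := by
    have : P.IsHomLift (S.map (U.map m.left)) (T.map m.left) :=
      isHomLift_map_of_comp_eq hsq.symm m.left
    have : P.IsHomLift (S.map j.hom) (T.map m.left ≫ φ j') := by
      rw [← CostructuredArrow.w m, S.map_comp]; infer_instance
    exact hP.codomain_eq_of_isHomLift (S.map j.hom) (φ j) (T.map m.left ≫ φ j')
  refine ⟨L (Classical.arbitrary _), fun j e' ψ hψ ↦ ?_⟩
  rw [← constant_of_preserves_morphisms L hL j]
  exact hP.codomain_eq_of_isHomLift (S.map j.hom) ψ (φ j)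

theorem existsUnique_diagonal [U.Initial] (hsq : U ⋙ S = T ⋙ P) :
    ∃! D : B ⥤ E, U ⋙ D = T ∧ D ⋙ P = S := by
  have := hP.faithful_s10
  choose d hd using fun b ↦ hP.exists_forall_codomain_eq_of_isHomLift hsq b
  have hT (a : A) : T.obj a = d (U.obj a) := by
    have : P.IsHomLift (S.map (𝟙 (U.obj a))) (𝟙 (T.obj a)) := by
      rw [S.map_id]; exact IsHomLift.id (Functor.congr_obj hsq a).symm
    exact hd _ (CostructuredArrow.mk (𝟙 (U.obj a))) _ this
  have hmap ⦃b b' : B⦄ (g : b ⟶ b') : ∃ m : d b ⟶ d b', P.IsHomLift (S.map g) m := by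
    let j : CostructuredArrow U b := Classical.arbitrary _
    obtain ⟨e, φ, hφ⟩ := hP.exists_isHomLift (S.map j.hom) (Functor.congr_obj hsq j.left).symm
    obtain rfl := hd b j φ hφ
    obtain ⟨e', ψ, hψ⟩ :=
      hP.exists_isHomLift (S.map g) (IsHomLift.codomain_eq P (S.map j.hom) φ)
    have : P.IsHomLift (S.map (CostructuredArrow.mk (j.hom ≫ g)).hom) (φ ≫ ψ) := by
      simp only [CostructuredArrow.mk_hom_eq_self, S.map_comp]; infer_instance
    obtain rfl := hd b' _ _ this
    exact ⟨ψ, hψ⟩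
  obtain ⟨D, hDobj, hDP⟩ := exists_comp_eq_of_isHomLift (P := P) S d hmap
  refine ⟨D, ⟨ext_of_comp_eq_of_faithful (P := P) (by rw [Functor.assoc, hDP, hsq])
    fun a ↦ (hDobj _).trans (hT a).symm, hDP⟩, ?_⟩
  rintro D' ⟨hUD', hD'P⟩
  refine ext_of_comp_eq_of_faithful (hD'P.trans hDP.symm) fun b ↦ ?_
  let j : CostructuredArrow U b := Classical.arbitrary _
  have : P.IsHomLift (S.map j.hom)
      (eqToHom (Functor.congr_obj hUD' j.left).symm ≫ D'.map j.hom) :=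
    have := isHomLift_map_of_comp_eq hD'P j.hom
    inferInstance
  exact (hd b j _ this).trans (hDobj b).symm

end IsDiscreteOpfib

/-- In the slice category of `Cat` over `C`, the morphisms whose underlying functor is initial
and the morphisms whose underlying functor is a discrete opfibration form an orthogonal
factorization system: every morphism factors as an initial morphism followed by a discrete
opfibration, and every strictly commuting square from an initial morphism to a discrete
opfibration admits a unique diagonal filler. -/
theorem comprehensive_factorization_system_on_slice (C : Type u) [Category.{u} C] :
    (∀ {X Y : Over (Cat.of C)} (f : X ⟶ Y),
      ∃ (Z : Over (Cat.of C)) (i : X ⟶ Z) (pz : Z ⟶ Y),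
        (i.left.toFunctor : ↑X.left ⥤ ↑Z.left).Initial ∧
        IsDiscreteOpfib (pz.left.toFunctor : ↑Z.left ⥤ ↑Y.left) ∧ i ≫ pz = f) ∧
    (∀ {A B E F : Over (Cat.of C)} (u : A ⟶ B) (pf : E ⟶ F),
      (u.left.toFunctor : ↑A.left ⥤ ↑B.left).Initial →
      IsDiscreteOpfib (pf.left.toFunctor : ↑E.left ⥤ ↑F.left) →
      ∀ (t : A ⟶ E) (s : B ⟶ F), u ≫ s = t ≫ pf →
        ∃! d : B ⟶ E, u ≫ d = t ∧ d ≫ pf = s) := by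
  refine ⟨fun {X Y} f ↦ ?_, fun {A B E F} u pf _ hP t s hsq ↦ ?_⟩
  · let G : X.left ⥤ Y.left := f.left.toFunctor
    let Z : Over (Cat.of C) :=
      Over.mk (Y := Cat.of G.costructuredArrowComponents.Elements)
        (CategoryOfElements.π _ ⋙ Y.hom.toFunctor).toCatHom
    exact ⟨Z, Over.homMk G.toComponentElements.toCatHom (Over.w f),
      Over.homMk (CategoryOfElements.π _).toCatHom, G.initial_toComponentElements,
      CategoryOfElements.isDiscreteOpfib_π_s10 _, rfl⟩
  · rw [Over.cat_hom_ext_iff] at hsq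
    obtain ⟨D, ⟨hUD, hDP⟩, hD⟩ := hP.existsUnique_diagonal hsq
    have hD_over : D.toCatHom ≫ E.hom = B.hom := by
      rw [← Over.w pf, ← Over.w s]
      exact congrArg (· ≫ F.hom) (Cat.Hom.ext hDP)
    refine ⟨Over.homMk D.toCatHom hD_over, ⟨(Over.cat_hom_ext_iff _ _).2 hUD,
      (Over.cat_hom_ext_iff _ _).2 hDP⟩, fun d ⟨hud, hdp⟩ ↦ (Over.cat_hom_ext_iff _ _).2 ?_⟩
    exact hD _ ⟨(Over.cat_hom_ext_iff _ _).1 hud, (Over.cat_hom_ext_iff _ _).1 hdp⟩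
end
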